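/- arXiv:1710.03367 — 2 statements merged into one kernel-verified Lean document; each statement's English description precedes it below -/
import Mathlib

section
/- Let $K\in\mathcal{L}(\mathcal{G})$ be a bounded operator with $\Im(K):=(K-K^*)/(2i)\ge 0$ and $0\in\rho(K)$. Then the integral $\log(K):=-i\int_0^\infty\big[(K+i\lambda I)^{-1}-(1+i\lambda)^{-1}I\big]\,d\lambda$ converges in operator norm and defines a bounded operator on $\mathcal{G}$. -/
local notation "⟪" x ", " y "⟫" => @inner ℂ _ _ x y

open MeasureTheory

/-!
Write `R λ = (K + iλ)⁻¹`. Dissipativity gives `λ‖f‖² ≤ Im ⟪f, (K + iλ) f⟫`, hence `‖R λ‖ ≤ 1/λ`.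
The resolvent identity `R λ - R μ = i(μ - λ) R λ R μ` together with this bound makes `R`
bounded by `2‖R 0‖` and Lipschitz on `[0, ∞)`, so the integrand is continuous there. Since
`R λ - (1 + iλ)⁻¹ = (1 + iλ)⁻¹ R λ (1 - K)`, the integrand is `O(λ⁻²)` at infinity.
-/

theorem sub_eq_mul_sub_mul_of_mul_eq_one {A : Type*} [Ring A] {a b r s : A}
    (har : a * r = 1) (hsb : s * b = 1) : s - r = s * (a - b) * r := by
  calc s - r = s * (a * r) - (s * b) * r := by rw [har, hsb, mul_one, one_mul]
    _ = s * (a - b) * r := by noncomm_ring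

theorem one_add_I_mul_ofReal_ne_zero (l : ℝ) : 1 + Complex.I * l ≠ 0 := by
  intro h
  simpa using congrArg Complex.re h

theorem norm_inv_one_add_I_mul_ofReal_le {l : ℝ} (hl : 0 < l) :
    ‖(1 + Complex.I * l)⁻¹‖ ≤ l⁻¹ := by
  rw [norm_inv]
  refine inv_anti₀ hl ?_
  calc l = |(1 + Complex.I * l).im| := by simp [abs_of_pos hl]
    _ ≤ ‖1 + Complex.I * l‖ := Complex.abs_im_le_norm _

section ShiftedInverse

variable {E : Type*} [NormedAddCommGroup E] [NormedSpace ℂ E]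

def IsShiftedInverse (K : E →L[ℂ] E) (R : ℝ → E →L[ℂ] E) : Prop :=
  ∀ l : ℝ, 0 ≤ l → (K + (Complex.I * l) • 1) * R l = 1 ∧ R l * (K + (Complex.I * l) • 1) = 1

variable {K : E →L[ℂ] E} {R : ℝ → E →L[ℂ] E}

theorem IsShiftedInverse.sub_eq (hR : IsShiftedInverse K R) {l m : ℝ} (hl : 0 ≤ l)
    (hm : 0 ≤ m) : R l - R m = (Complex.I * (m - l)) • (R l * R m) := by
  rw [sub_eq_mul_sub_mul_of_mul_eq_one (hR m hm).1 (hR l hl).2, add_sub_add_left_eq_sub,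
    ← sub_smul, mul_sub, mul_smul_comm, mul_one, smul_mul_assoc]

theorem IsShiftedInverse.norm_sub_le (hR : IsShiftedInverse K R) {l m : ℝ} (hl : 0 ≤ l)
    (hm : 0 ≤ m) : ‖R l - R m‖ ≤ |l - m| * (‖R l‖ * ‖R m‖) := by
  rw [hR.sub_eq hl hm, norm_smul, norm_mul, Complex.norm_I, one_mul, ← Complex.ofReal_sub,
    Complex.norm_real, Real.norm_eq_abs, abs_sub_comm]
  gcongr
  exact norm_mul_le _ _

theorem IsShiftedInverse.sub_smul_one_eq (hR : IsShiftedInverse K R) {l : ℝ} (hl : 0 ≤ l) :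
    R l - (1 + Complex.I * l)⁻¹ • (1 : E →L[ℂ] E)
      = (1 + Complex.I * l)⁻¹ • (R l * (1 - K)) := by
  have hne : (1 + Complex.I * l) ≠ 0 := one_add_I_mul_ofReal_ne_zero l
  have h1K : (1 : E →L[ℂ] E) - K = (1 + Complex.I * l) • 1 - (K + (Complex.I * l) • 1) := by
    module
  rw [h1K, mul_sub, (hR l hl).2, mul_smul_comm, mul_one, smul_sub, smul_smul,
    inv_mul_cancel₀ hne, one_smul]

end ShiftedInverse

section Dissipative

variable {E : Type*} [NormedAddCommGroup E] [InnerProductSpace ℂ E]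

theorem mul_norm_le_norm_add_I_smul {K : E →L[ℂ] E} (hdiss : ∀ f : E, 0 ≤ (⟪f, K f⟫).im)
    (l : ℝ) (f : E) : l * ‖f‖ ≤ ‖K f + (Complex.I * l) • f‖ := by
  have him : l * ‖f‖ ^ 2 ≤ (⟪f, K f + (Complex.I * l) • f⟫).im := by
    rw [inner_add_right, inner_smul_right, inner_self_eq_norm_sq_to_K]
    simpa [Complex.mul_im, ← Complex.ofReal_pow] using hdiss f
  have hcs : (⟪f, K f + (Complex.I * l) • f⟫).im ≤ ‖f‖ * ‖K f + (Complex.I * l) • f‖ :=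
    (Complex.im_le_norm _).trans (norm_inner_le_norm _ _)
  rcases (norm_nonneg f).eq_or_lt with hf | hf
  · rw [← hf, mul_zero]; exact norm_nonneg _
  · nlinarith

theorem norm_le_inv_of_mul_eq_one {K R : E →L[ℂ] E} (hdiss : ∀ f : E, 0 ≤ (⟪f, K f⟫).im)
    {l : ℝ} (hl : 0 < l) (hR : (K + (Complex.I * l) • 1) * R = 1) : ‖R‖ ≤ l⁻¹ := by
  refine ContinuousLinearMap.opNorm_le_bound _ (inv_nonneg.2 hl.le) fun g => ?_
  have hg : K (R g) + (Complex.I * l) • R g = g := by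
    simpa using congrArg (fun T => T g) hR
  have := mul_norm_le_norm_add_I_smul hdiss l (R g)
  rw [hg] at this
  rw [inv_mul_eq_div, le_div_iff₀ hl]
  linarith

variable {K : E →L[ℂ] E} {R : ℝ → E →L[ℂ] E}

theorem IsShiftedInverse.norm_le_inv (hR : IsShiftedInverse K R)
    (hdiss : ∀ f : E, 0 ≤ (⟪f, K f⟫).im) {l : ℝ} (hl : 0 < l) : ‖R l‖ ≤ l⁻¹ :=
  norm_le_inv_of_mul_eq_one hdiss hl (hR l hl.le).1

theorem IsShiftedInverse.norm_le_two_mul (hR : IsShiftedInverse K R)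
    (hdiss : ∀ f : E, 0 ≤ (⟪f, K f⟫).im) {l : ℝ} (hl : 0 ≤ l) : ‖R l‖ ≤ 2 * ‖R 0‖ := by
  have hsmall : l * ‖R l‖ ≤ 1 := by
    rcases hl.eq_or_lt with rfl | hl
    · simp
    · simpa [hl.ne'] using mul_le_mul_of_nonneg_left (hR.norm_le_inv hdiss hl) hl.le
  have hdiff := hR.norm_sub_le hl le_rfl
  rw [sub_zero, abs_of_nonneg hl] at hdiff
  calc ‖R l‖ ≤ ‖R 0‖ + ‖R l - R 0‖ := norm_le_norm_add_norm_sub' (R l) (R 0)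
    _ ≤ ‖R 0‖ + ‖R 0‖ * (l * ‖R l‖) := by nlinarith
    _ ≤ 2 * ‖R 0‖ := by nlinarith [norm_nonneg (R 0)]

theorem IsShiftedInverse.lipschitzOnWith (hR : IsShiftedInverse K R)
    (hdiss : ∀ f : E, 0 ≤ (⟪f, K f⟫).im) :
    LipschitzOnWith ((2 * ‖R 0‖₊) ^ 2) R (Set.Ici 0) := by
  refine LipschitzOnWith.of_dist_le_mul fun l hl m hm => ?_
  rw [dist_eq_norm, Real.dist_eq, NNReal.coe_pow, NNReal.coe_mul, coe_nnnorm, NNReal.coe_ofNat,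
    mul_comm, sq]
  exact (hR.norm_sub_le hl hm).trans (by
    gcongr
    exacts [hR.norm_le_two_mul hdiss hl, hR.norm_le_two_mul hdiss hm])

theorem IsShiftedInverse.norm_sub_smul_one_le (hR : IsShiftedInverse K R)
    (hdiss : ∀ f : E, 0 ≤ (⟪f, K f⟫).im) {l : ℝ} (hl : 0 < l) :
    ‖R l - (1 + Complex.I * l)⁻¹ • (1 : E →L[ℂ] E)‖ ≤ ‖1 - K‖ * l ^ (-2 : ℝ) := by
  rw [hR.sub_smul_one_eq hl.le, norm_smul, Real.rpow_neg hl.le, Real.rpow_two, sq, mul_inv]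
  calc ‖(1 + Complex.I * l)⁻¹‖ * ‖R l * (1 - K)‖ ≤ l⁻¹ * (l⁻¹ * ‖1 - K‖) := by
        gcongr
        · exact norm_inv_one_add_I_mul_ofReal_le hl
        · exact (norm_mul_le _ _).trans (by gcongr; exact hR.norm_le_inv hdiss hl)
    _ = ‖1 - K‖ * (l⁻¹ * l⁻¹) := by ring

end Dissipative

theorem statement8_general {𝒢 : Type*} [NormedAddCommGroup 𝒢] [InnerProductSpace ℂ 𝒢]
    (K : 𝒢 →L[ℂ] 𝒢)
    (hdiss : ∀ f : 𝒢, 0 ≤ (⟪f, K f⟫).im)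
    (Kinv : ℝ → 𝒢 →L[ℂ] 𝒢)
    (hKinv : ∀ l : ℝ, 0 ≤ l →
      (K + (Complex.I * l) • (1 : 𝒢 →L[ℂ] 𝒢)) ∘L Kinv l = 1 ∧
      Kinv l ∘L (K + (Complex.I * l) • (1 : 𝒢 →L[ℂ] 𝒢)) = 1) :
    IntegrableOn
      (fun l : ℝ => Kinv l - ((1 + Complex.I * l)⁻¹) • (1 : 𝒢 →L[ℂ] 𝒢))
      (Set.Ioi (0 : ℝ)) := by
  have hR : IsShiftedInverse K Kinv := hKinv
  have hcont : ContinuousOn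
      (fun l : ℝ => Kinv l - ((1 + Complex.I * l)⁻¹) • (1 : 𝒢 →L[ℂ] 𝒢)) (Set.Ici 0) := by
    refine (hR.lipschitzOnWith hdiss).continuousOn.sub (Continuous.continuousOn ?_)
    exact (Continuous.inv₀ (by fun_prop) one_add_I_mul_ofReal_ne_zero).smul continuous_const
  have hdecay : (fun l : ℝ => Kinv l - ((1 + Complex.I * l)⁻¹) • (1 : 𝒢 →L[ℂ] 𝒢))
      =O[Filter.atTop] fun l : ℝ => l ^ (-2 : ℝ) := by
    refine Asymptotics.IsBigO.of_bound ‖1 - K‖ ?_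
    filter_upwards [Filter.eventually_gt_atTop 0] with l hl
    rw [Real.norm_of_nonneg (by positivity)]
    exact hR.norm_sub_smul_one_le hdiss hl
  exact ((hcont.locallyIntegrableOn measurableSet_Ici).integrableOn_of_isBigO_atTop hdecay
    (integrableAtFilter_rpow_atTop_iff.2 (by norm_num))).mono_set Set.Ioi_subset_Ici_self

/-- For a bounded dissipative operator `K` (`Im K ≥ 0`) with `0 ∈ ρ(K)`, so that
`K + iλ` is boundedly invertible for all `λ ≥ 0`, the integrand
`(K + iλ)⁻¹ - (1 + iλ)⁻¹ I` defining `log K` is Bochner integrable on `(0, ∞)` in operator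
norm; in particular `log K` is a bounded operator. -/
theorem statement8 {𝒢 : Type*} [NormedAddCommGroup 𝒢] [InnerProductSpace ℂ 𝒢]
    [CompleteSpace 𝒢]
    (K : 𝒢 →L[ℂ] 𝒢)
    (hdiss : ∀ f : 𝒢, 0 ≤ (⟪f, K f⟫).im)
    (Kinv : ℝ → 𝒢 →L[ℂ] 𝒢)
    (hKinv : ∀ l : ℝ, 0 ≤ l →
      (K + (Complex.I * l) • (1 : 𝒢 →L[ℂ] 𝒢)) ∘L Kinv l = 1 ∧
      Kinv l ∘L (K + (Complex.I * l) • (1 : 𝒢 →L[ℂ] 𝒢)) = 1) :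
    IntegrableOn
      (fun l : ℝ => Kinv l - ((1 + Complex.I * l)⁻¹) • (1 : 𝒢 →L[ℂ] 𝒢))
      (Set.Ioi (0 : ℝ)) :=
  statement8_general K hdiss Kinv hKinv
end

section
/- Assume the Green's identity setting of the previous statement, let $c\in\mathbb{R}$ and $\alpha\in C^1(\mathcal{C})$ real-valued with $\alpha(x)\ne c$ for all $x$. Define $\Gamma_0 f=c\gamma_D^{\rm i}f_{\rm i}-(\gamma_N^{\rm i}f_{\rm i}+\gamma_N^{\rm e}f_{\rm e})$ and $\Gamma_1 f=(c-\alpha)^{-1}(\alpha\gamma_D^{\rm i}f_{\rm i}-(\gamma_N^{\rm i}f_{\rm i}+\gamma_N^{\rm e}f_{\rm e}))$ on $\mathrm{dom}(T)=\{f\in H^2(\Omega_{\rm i})\times H^2(\Omega_{\rm e}):\gamma_D^{\rm i}f_{\rm i}=\gamma_D^{\rm e}f_{\rm e}\}$. Then the abstract Green's identity $(Tf,g)-(f,Tg)=(\Gamma_1f,\Gamma_0g)_{L^2(\mathcal{C})}-(\Gamma_0f,\Gamma_1g)_{L^2(\mathcal{C})}$ holds for all $f,g\in\mathrm{dom}(T)$,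 where $Tf=-\Delta f$. -/
local notation "⟪" x ", " y "⟫" => @inner ℂ _ _ x y

/-- In the two-domain Green's identity setting, with `A` the (self-adjoint, bounded)
multiplication by the real-valued function `α` on `L²(𝒞)`, `c ∈ ℝ` with `α ≠ c`, and `W` the
(self-adjoint, bounded) multiplication by `(c - α)⁻¹` (so `W (c - A) = 1` and `W` commutes
with `A`), the boundary maps
`Γ₀ f = c γ_D f_i - (γ_N^i f_i + γ_N^e f_e)` and
`Γ₁ f = (c - α)⁻¹ (α γ_D f_i - (γ_N^i f_i + γ_N^e f_e))`
satisfy the abstract Green identity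
`(Tf, g) - (f, Tg) = (Γ₁ f, Γ₀ g) - (Γ₀ f, Γ₁ g)` for `Tf = -Δf`. -/
theorem statement12 {Hi He Gb : Type*}
    [NormedAddCommGroup Hi] [InnerProductSpace ℂ Hi]
    [NormedAddCommGroup He] [InnerProductSpace ℂ He]
    [NormedAddCommGroup Gb] [InnerProductSpace ℂ Gb] [CompleteSpace Gb]
    (Di : Submodule ℂ Hi) (De : Submodule ℂ He)
    (Ti : Di →ₗ[ℂ] Hi) (Te : De →ₗ[ℂ] He)
    (γDi γNi : Di →ₗ[ℂ] Gb) (γDe γNe : De →ₗ[ℂ] Gb)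
    (green_i : ∀ u v : Di,
      ⟪Ti u, (v : Hi)⟫ - ⟪(u : Hi), Ti v⟫ = ⟪γDi u, γNi v⟫ - ⟪γNi u, γDi v⟫)
    (green_e : ∀ u v : De,
      ⟪Te u, (v : He)⟫ - ⟪(u : He), Te v⟫ = ⟪γDe u, γNe v⟫ - ⟪γNe u, γDe v⟫)
    (c : ℝ) (A W : Gb →L[ℂ] Gb)
    (hA : IsSelfAdjoint A) (hW : IsSelfAdjoint W)
    (hWinv : W ∘L ((c : ℂ) • (1 : Gb →L[ℂ] Gb) - A) = 1)
    (hcomm : A ∘L W = W ∘L A)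
    (fi gi : Di) (fe ge : De)
    (hf : γDi fi = γDe fe) (hg : γDi gi = γDe ge) :
    (⟪Ti fi, (gi : Hi)⟫ + ⟪Te fe, (ge : He)⟫)
      - (⟪(fi : Hi), Ti gi⟫ + ⟪(fe : He), Te ge⟫)
      = ⟪W (A (γDi fi) - (γNi fi + γNe fe)),
          (c : ℂ) • γDi gi - (γNi gi + γNe ge)⟫
        - ⟪(c : ℂ) • γDi fi - (γNi fi + γNe fe),
            W (A (γDi gi) - (γNi gi + γNe ge))⟫ := by

  have hsymA : ∀ x y : Gb, ⟪A x, y⟫ = ⟪x, A y⟫ := fun x y => by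
    conv_lhs => rw [← hA.adjoint_eq]
    exact ContinuousLinearMap.adjoint_inner_left A y x
  have hsymW : ∀ x y : Gb, ⟪W x, y⟫ = ⟪x, W y⟫ := fun x y => by
    conv_lhs => rw [← hW.adjoint_eq]
    exact ContinuousLinearMap.adjoint_inner_left W y x
  have hinv : ∀ x : Gb, W ((c : ℂ) • x - A x) = x := fun x => by
    have h := congrArg (fun T : Gb →L[ℂ] Gb => T x) hWinv
    simpa using h
  have hinv2 : ∀ x : Gb, (c : ℂ) • W x - A (W x) = x := fun x => by
    have h := congrArg (fun T : Gb →L[ℂ] Gb => T x) hcomm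
    simp only [ContinuousLinearMap.comp_apply] at h
    rw [h, ← map_smul, ← map_sub]
    exact hinv x
  have key : ∀ d n d' n' : Gb,
      ⟪W (A d - n), (c : ℂ) • d' - n'⟫ - ⟪(c : ℂ) • d - n, W (A d' - n')⟫
        = ⟪d, n'⟫ - ⟪n, d'⟫ := by
    intro d n d' n'
    rw [hsymW]
    set z := (c : ℂ) • d' - n' with hz
    have split : ⟪A d - n, W z⟫ - ⟪(c : ℂ) • d - n, W (A d' - n')⟫
        = ⟪A d - (c : ℂ) • d, W z⟫
          + ⟪(c : ℂ) • d - n, W z - W (A d' - n')⟫ := by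
      simp only [inner_sub_left, inner_sub_right]
      ring
    rw [split]
    have h1 : ⟪A d - (c : ℂ) • d, W z⟫ = ⟪d, -z⟫ := by
      rw [inner_sub_left, hsymA, inner_smul_left, ← inner_smul_right, ← inner_sub_right]
      have : A (W z) - (starRingEnd ℂ) (c : ℂ) • W z = -z := by
        rw [Complex.conj_ofReal, ← neg_sub, hinv2]
      rw [this]
    have h2 : W z - W (A d' - n') = d' := by
      rw [← map_sub]
      have : z - (A d' - n') = (c : ℂ) • d' - A d' := by rw [hz]; abel
      rw [this, hinv]
    rw [h1, h2, inner_neg_right, hz, inner_sub_right, inner_sub_left,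
      inner_smul_right, inner_smul_left, Complex.conj_ofReal]
    ring
  have hL := green_i fi gi
  have hLe := green_e fe ge
  rw [← hf, ← hg] at hLe
  calc (⟪Ti fi, (gi : Hi)⟫ + ⟪Te fe, (ge : He)⟫)
      - (⟪(fi : Hi), Ti gi⟫ + ⟪(fe : He), Te ge⟫)
      = (⟪Ti fi, (gi : Hi)⟫ - ⟪(fi : Hi), Ti gi⟫)
        + (⟪Te fe, (ge : He)⟫ - ⟪(fe : He), Te ge⟫) := by ring
    _ = ⟪γDi fi, γNi gi + γNe ge⟫ - ⟪γNi fi + γNe fe, γDi gi⟫ := by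
        rw [hL, hLe, inner_add_right, inner_add_left]; ring
    _ = _ := (key (γDi fi) (γNi fi + γNe fe) (γDi gi) (γNi gi + γNe ge)).symm
end
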